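/- arXiv:math/0607571 — 6 statements merged into one kernel-verified Lean document; each statement's English description precedes it below -/
import Mathlib

section
/- Let d ≥ 3 and let D be a dihedral group of order 2^d. Then the W-algebra W[[t]]/(p_d(t)·(t − 2), 2·p_d(t)) is isomorphic to a subquotient algebra of the group algebra WD: there exist a W-subalgebra S of WD and an ideal J of S such that S/J is isomorphic to W[[t]]/(p_d(t)(t − 2), 2p_d(t)) as a W-algebra. -/
instance : Fact (Nat.Prime 2) := ⟨Nat.prime_two⟩

/-- The polynomials `q_ℓ ∈ ℤ[t]` defined by `q_2 = t` and `q_ℓ = q_{ℓ-1}^2 - 2` for `ℓ ≥ 3`. -/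
noncomputable def qPoly : ℕ → Polynomial ℤ
  | 0 => Polynomial.X
  | 1 => Polynomial.X
  | 2 => Polynomial.X
  | (n + 3) => qPoly (n + 2) ^ 2 - 2

/-- The polynomial `p_d = ∏_{ℓ=2}^{d-1} q_ℓ ∈ ℤ[t]`. -/
noncomputable def pPoly (d : ℕ) : Polynomial ℤ :=
  ∏ ℓ ∈ Finset.Icc 2 (d - 1), qPoly ℓ

/-- The image of `p_d` in `W[[t]]`. -/
noncomputable def pPowerSeries (k : Type*) [CommRing k] (d : ℕ) :
    PowerSeries (WittVector 2 k) :=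
  Polynomial.aeval (PowerSeries.X : PowerSeries (WittVector 2 k)) (pPoly d)

universe u

/-!
Put `n = 2 ^ (d - 1)`, `c = n / 2` and `x = r + r⁻¹ ∈ WD`; the subalgebra is
`W[x] ≅ W[X] ⧸ ker (X ↦ x)`. Writing `x = u + u⁻¹` with `u` a unit,
`q_ℓ(x) = u^(2^(ℓ-2)) + u^(-2^(ℓ-2))`, so `(u - u⁻¹) p_d(x) = u^c - u^(-c)` telescopes, and `m = (X² - 4) p_d` kills `x` because
`X² - 4 = (u - u⁻¹)²` and `u^c = u^(-c)` when `u^n = 1`. Conversely, the remainder modulo the monic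
`m` (of degree `c + 1`) of a polynomial killing `x` vanishes at the `c + 1` distinct values
`ζ^a + ζ^(-a)` taken by `x` under the characters of `⟨r⟩`, so `ker (X ↦ x) = (m)`.
Sending `X` to `t` kills `m = (t + 2) (t - 2) p_d(t)` in `W[[t]]/(p_d(t)(t - 2), 2 p_d(t))`, and is
surjective because this ideal contains `t p_d(t) = p_d(t)(t - 2) + 2 p_d(t)`, a distinguished
polynomial (it is `t^c` mod 2), so Weierstrass division by it reduces every power series to a
polynomial.
-/

open Polynomial

namespace Polynomial

variable {R : Type*} [CommRing R] {I : Ideal R}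

theorem isDistinguishedAt_X : (X : R[X]).IsDistinguishedAt I where
  mem {n} hn := by
    obtain rfl : n = 0 := by have := natDegree_X_le (R := R); omega
    simp
  monic := monic_X

theorem isDistinguishedAt_one : (1 : R[X]).IsDistinguishedAt I where
  mem {n} hn := by simp at hn
  monic := monic_one

namespace IsDistinguishedAt

theorem sub_C {f : R[X]} (hf : f.IsDistinguishedAt I) (hdeg : 0 < f.natDegree) {a : R}
    (ha : a ∈ I) : (f - C a).IsDistinguishedAt I where
  mem {n} hn := by
    rw [natDegree_sub_C] at hn
    rw [coeff_sub, coeff_C]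
    split_ifs
    · exact sub_mem (hf.mem hn) ha
    · simpa using hf.mem hn
  monic := hf.monic.sub_of_left <| (degree_C_le).trans_lt <| natDegree_pos_iff_degree_pos.mp hdeg

theorem map {S : Type*} [CommRing S] {f : R[X]} (hf : f.IsDistinguishedAt I) (φ : R →+* S) :
    (f.map φ).IsDistinguishedAt (I.map φ) :=
  ⟨hf.toIsWeaklyEisensteinAt.map φ, hf.monic.map φ⟩

theorem surjective_aeval_mk_X [IsAdicComplete I R] {f : R[X]} (hf : f.IsDistinguishedAt I)
    {J : Ideal (PowerSeries R)} (hfJ : aeval PowerSeries.X f ∈ J) :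
    Function.Surjective (aeval (R := R) (Ideal.Quotient.mkₐ R J PowerSeries.X)) := by
  intro y
  obtain ⟨G, rfl⟩ := Ideal.Quotient.mk_surjective y
  set H := hf.isWeierstrassDivisorAt'
  obtain ⟨-, hG⟩ := H.isWeierstrassDivisionAt_div_mod G
  have hcoe (r : R[X]) : aeval PowerSeries.X r = (r : PowerSeries R) := eval₂_C_X_eq_coe
  refine ⟨H.mod G, ?_⟩
  rw [hcoe] at hfJ
  rw [aeval_algHom_apply, hcoe, Ideal.Quotient.mkₐ_eq_mk, Ideal.Quotient.mk_eq_mk_iff_sub_mem]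
  nth_rw 2 [hG]
  rw [sub_add_cancel_right, neg_mem_iff]
  exact J.mul_mem_right _ hfJ

end IsDistinguishedAt

end Polynomial

theorem qPoly_add_three (j : ℕ) : qPoly (j + 3) = qPoly (j + 2) ^ 2 - 2 := rfl

theorem pPoly_add_three (j : ℕ) : pPoly (j + 3) = pPoly (j + 2) * qPoly (j + 2) :=
  Finset.prod_Icc_succ_top (by omega) _

theorem qPoly_isDistinguishedAt_and_natDegree (j : ℕ) :
    (qPoly (j + 2)).IsDistinguishedAt (Ideal.span {2}) ∧ (qPoly (j + 2)).natDegree = 2 ^ j := by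
  induction j with
  | zero => exact ⟨isDistinguishedAt_X, natDegree_X⟩
  | succ j ih =>
    obtain ⟨hq, hdeg⟩ := ih
    have hsq : (qPoly (j + 2) * qPoly (j + 2)).natDegree = 2 ^ (j + 1) := by
      rw [natDegree_mul hq.monic.ne_zero hq.monic.ne_zero, hdeg, pow_succ, mul_two]
    rw [qPoly_add_three, ← C_ofNat, sq]
    refine ⟨(hq.mul hq).sub_C (by rw [hsq]; positivity) (Ideal.mem_span_singleton_self 2), ?_⟩
    rw [natDegree_sub_C, hsq]

theorem pPoly_isDistinguishedAt_and_natDegree (j : ℕ) :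
    (pPoly (j + 2)).IsDistinguishedAt (Ideal.span {2}) ∧ (pPoly (j + 2)).natDegree + 1 = 2 ^ j := by
  induction j with
  | zero => exact ⟨isDistinguishedAt_one, by simp [pPoly]⟩
  | succ j ih =>
    obtain ⟨hq, hqdeg⟩ := qPoly_isDistinguishedAt_and_natDegree j
    rw [pPoly_add_three]
    refine ⟨ih.1.mul hq, ?_⟩
    rw [natDegree_mul ih.1.monic.ne_zero hq.monic.ne_zero, hqdeg, pow_succ]
    omega

noncomputable def mPoly (d : ℕ) : ℤ[X] := (X ^ 2 - C 4) * pPoly d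

theorem mPoly_monic_and_natDegree (j : ℕ) :
    (mPoly (j + 2)).Monic ∧ (mPoly (j + 2)).natDegree = 2 ^ j + 1 := by
  obtain ⟨hp, hpdeg⟩ := pPoly_isDistinguishedAt_and_natDegree j
  have hX : ((X : ℤ[X]) ^ 2 - C 4).Monic := monic_X_pow_sub_C 4 two_ne_zero
  refine ⟨hX.mul hp.monic, ?_⟩
  rw [mPoly, natDegree_mul hX.ne_zero hp.monic.ne_zero, natDegree_X_pow_sub_C]
  omega

section UnitAddInv

variable {S : Type*} [CommRing S] (u : Sˣ)

theorem aeval_qPoly_add_inv (j : ℕ) :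
    aeval ((u : S) + ↑u⁻¹) (qPoly (j + 2)) = ↑(u ^ 2 ^ j) + ↑(u ^ 2 ^ j)⁻¹ := by
  induction j with
  | zero => simp [qPoly]
  | succ j ih =>
    rw [qPoly_add_three, map_sub, map_pow, ih, map_ofNat, pow_succ 2 j, pow_mul]
    generalize u ^ 2 ^ j = v
    push_cast
    linear_combination (2 : S) * v.mul_inv

theorem sub_inv_mul_aeval_pPoly (j : ℕ) :
    ((u : S) - ↑u⁻¹) * aeval ((u : S) + ↑u⁻¹) (pPoly (j + 2)) = ↑(u ^ 2 ^ j) - ↑(u ^ 2 ^ j)⁻¹ := by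
  induction j with
  | zero => simp [pPoly]
  | succ j ih =>
    rw [pPoly_add_three, map_mul, ← mul_assoc, ih, aeval_qPoly_add_inv, pow_succ, pow_mul]
    push_cast
    ring

theorem aeval_mPoly_eq_zero (j : ℕ) (hu : u ^ 2 ^ (j + 1) = 1) :
    aeval ((u : S) + ↑u⁻¹) (mPoly (j + 2)) = 0 := by
  have hsq : (u ^ 2 ^ j) ^ 2 = 1 := by rw [← pow_mul, ← pow_succ, hu]
  have hinv : (u ^ 2 ^ j)⁻¹ = u ^ 2 ^ j := inv_eq_of_mul_eq_one_left (by rw [← sq, hsq])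
  calc aeval ((u : S) + ↑u⁻¹) (mPoly (j + 2))
      = ((u : S) - ↑u⁻¹) * (((u : S) - ↑u⁻¹) * aeval ((u : S) + ↑u⁻¹) (pPoly (j + 2))) := by
        rw [mPoly, map_mul, map_sub, map_pow, aeval_X, aeval_C, map_ofNat]
        linear_combination (4 : S) * Units.mul_inv u * aeval ((u : S) + ↑u⁻¹) (pPoly (j + 2))
    _ = 0 := by rw [sub_inv_mul_aeval_pPoly, hinv, sub_self, mul_zero]

end UnitAddInv

noncomputable def cyclicGenerator (R : Type*) [CommRing R] (n : ℕ) :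
    (MonoidAlgebra R (Multiplicative (ZMod n)))ˣ :=
  (MonoidAlgebra.of R _).toHomUnits (Multiplicative.ofAdd 1)

theorem cyclicGenerator_pow_eq_one (R : Type*) [CommRing R] (n : ℕ) :
    cyclicGenerator R n ^ n = 1 := by
  rw [cyclicGenerator, ← map_pow, ← ofAdd_nsmul, nsmul_one, ZMod.natCast_self, ofAdd_zero, map_one]

noncomputable def rotationSum (R : Type*) [CommRing R] (n : ℕ) :
    MonoidAlgebra R (Multiplicative (ZMod n)) :=
  ↑(cyclicGenerator R n) + ↑(cyclicGenerator R n)⁻¹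

noncomputable def zmodCharacter {M : Type*} [CommGroup M] {n : ℕ} (z : M) (hz : z ^ n = 1) :
    Multiplicative (ZMod n) →* M :=
  AddMonoidHom.toMultiplicativeLeft
    (ZMod.lift n ⟨zmultiplesHom _ (Additive.ofMul z), by simp [← ofMul_pow, hz]⟩)

theorem zmodCharacter_ofAdd_one {M : Type*} [CommGroup M] {n : ℕ} (z : M) (hz : z ^ n = 1) :
    zmodCharacter z hz (Multiplicative.ofAdd 1) = z := by
  rw [zmodCharacter, AddMonoidHom.coe_toMultiplicativeLeft, Function.comp_apply,
    Function.comp_apply, toAdd_ofAdd, ← Int.cast_one, ZMod.lift_coe]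
  simp

theorem aeval_add_inv_eq_zero_of_aeval_rotationSum {R K : Type*} [CommRing R] [Field K]
    [Algebra R K] {n : ℕ} {g : R[X]}
    (hg : aeval (rotationSum R n) g = 0) (z : Kˣ)
    (hz : z ^ n = 1) : aeval ((z : K) + (z : K)⁻¹) g = 0 := by
  let χ := MonoidAlgebra.lift R K _ ((Units.coeHom K).comp (zmodCharacter z hz))
  have hχ : χ (cyclicGenerator R n) = z := by
    simp [χ, cyclicGenerator, zmodCharacter_ofAdd_one]
  rw [← hχ, ← map_units_inv, ← map_add, aeval_algHom_apply, ← rotationSum, hg, map_zero]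

theorem IsPrimitiveRoot.injective_pow_add_inv_pow {K : Type*} [Field K] {ζ : K} {c : ℕ}
    (hζ : IsPrimitiveRoot ζ (2 * c)) :
    Function.Injective fun a : Fin (c + 1) ↦ ζ ^ (a : ℕ) + (ζ ^ (a : ℕ))⁻¹ := by
  intro a b hab
  have ha := a.isLt
  have hb := b.isLt
  rcases Nat.eq_zero_or_pos c with rfl | hc
  · exact Fin.ext (by omega)
  have hζ0 : ζ ≠ 0 := hζ.ne_zero (by omega)
  have key : (ζ ^ (a : ℕ) - ζ ^ (b : ℕ)) * (ζ ^ ((a : ℕ) + b) - 1) = 0 := by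
    simp only at hab
    field_simp at hab
    rw [pow_add]
    linear_combination hab
  rcases mul_eq_zero.mp key with h | h
  · exact Fin.ext (hζ.pow_inj (by omega) (by omega) (sub_eq_zero.mp h))
  · obtain ⟨e, he⟩ := hζ.dvd_of_pow_eq_one _ (sub_eq_zero.mp h)
    rcases e with _ | _ | e
    · exact Fin.ext (by omega)
    · exact Fin.ext (by omega)
    · exact absurd he (by nlinarith)

theorem mPoly_map_dvd_of_aeval_rotationSum_eq_zero {R : Type*} [CommRing R] [IsDomain R]
    (h2 : (2 : R) ≠ 0) (j : ℕ) {g : R[X]} (hg : aeval (rotationSum R (2 ^ (j + 1))) g = 0) :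
    (mPoly (j + 2)).map (algebraMap ℤ R) ∣ g := by
  obtain ⟨hm, hmdeg⟩ := mPoly_monic_and_natDegree j
  set m := (mPoly (j + 2)).map (algebraMap ℤ R)
  have hmR : m.Monic := hm.map _
  rw [← modByMonic_eq_zero_iff_dvd hmR]
  have hmx : aeval (rotationSum R (2 ^ (j + 1))) m = 0 := by
    rw [aeval_map_algebraMap]
    exact aeval_mPoly_eq_zero _ j (cyclicGenerator_pow_eq_one R _)
  have hr : aeval (rotationSum R (2 ^ (j + 1))) (g %ₘ m) = 0 := by
    rw [modByMonic_eq_sub_mul_div, map_sub, map_mul, hg, hmx, zero_mul, sub_zero]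
  let K := AlgebraicClosure (FractionRing R)
  have hinj : Function.Injective (algebraMap R K) :=
    (algebraMap (FractionRing R) K).injective.comp (IsFractionRing.injective R _)
  have : NeZero ((2 : ℕ) : FractionRing R) :=
    ⟨by
      rw [Nat.cast_ofNat, ← map_ofNat (algebraMap R (FractionRing R))]
      exact (map_ne_zero_iff _ (IsFractionRing.injective R _)).mpr h2⟩
  obtain ⟨ζ, hζ⟩ := HasEnoughRootsOfUnity.exists_primitiveRoot K (2 ^ (j + 1))
  set ζu := (hζ.isUnit (by positivity)).unit
  have hζu : ζu ^ 2 ^ (j + 1) = 1 := Units.ext (by simpa [ζu] using hζ.pow_eq_one)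
  refine (Polynomial.map_eq_zero_iff hinj).mp <| eq_zero_of_natDegree_lt_card_of_eval_eq_zero _
    (IsPrimitiveRoot.injective_pow_add_inv_pow (c := 2 ^ j) (by rwa [← pow_succ'])) (fun a ↦ ?_) ?_
  · have := aeval_add_inv_eq_zero_of_aeval_rotationSum hr (ζu ^ (a : ℕ))
      (by rw [← pow_mul, mul_comm, pow_mul, hζu, one_pow])
    simpa [ζu, eval_map_algebraMap] using this
  · have hmdegR : m.natDegree = 2 ^ j + 1 := by rw [hm.natDegree_map, hmdeg]
    calc ((g %ₘ m).map (algebraMap R K)).natDegree ≤ (g %ₘ m).natDegree := natDegree_map_le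
      _ < m.natDegree := natDegree_modByMonic_lt g hmR fun h ↦ by simp [h] at hmdegR
      _ = _ := by rw [hmdegR, Fintype.card_fin]

def rotationHom (n : ℕ) : Multiplicative (ZMod n) →* DihedralGroup n where
  toFun a := DihedralGroup.r a.toAdd
  map_one' := rfl
  map_mul' _ _ := (DihedralGroup.r_mul_r _ _).symm

theorem rotationHom_injective (n : ℕ) : Function.Injective (rotationHom n) :=
  fun _ _ h ↦ DihedralGroup.r.inj h

theorem exists_subquotient_of_ker_le {A : Type u} {R C E : Type*} [CommRing R] [CommRing A]
    [Algebra R A] [Ring C] [Algebra R C] [Ring E] [Algebra R E] (φ : A →ₐ[R] C) (ψ : A →ₐ[R] E)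
    (hψ : Function.Surjective ψ) (h : RingHom.ker φ ≤ RingHom.ker ψ) :
    ∃ (B : Type u) (_ : Ring B) (_ : Algebra R B) (ι : B →ₐ[R] C) (π : B →ₐ[R] E),
      Function.Injective ι ∧ Function.Surjective π :=
  ⟨A ⧸ RingHom.ker φ, inferInstance, inferInstance, Ideal.kerLiftAlg φ,
    Ideal.Quotient.liftₐ _ ψ fun _ ha ↦ h ha, Ideal.kerLiftAlg_injective φ,
    Ideal.Quotient.lift_surjective_of_surjective _ _ hψ⟩

section RdIdeal

variable (k : Type*) [CommRing k] (d : ℕ)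

local notation "J" => Ideal.span {pPowerSeries k d * (PowerSeries.X - 2), 2 * pPowerSeries k d}

theorem aeval_X_mul_pPoly_mem_span :
    aeval PowerSeries.X ((X * pPoly d).map (algebraMap ℤ (WittVector 2 k))) ∈ J := by
  rw [aeval_map_algebraMap, map_mul, aeval_X]
  exact Ideal.mem_span_pair.mpr ⟨1, 1, by rw [pPowerSeries]; ring⟩

theorem aeval_mk_X_mPoly_eq_zero :
    aeval (Ideal.Quotient.mkₐ (WittVector 2 k) J PowerSeries.X) (mPoly d) = 0 := by
  -- `mPoly d` has integer coefficients, so `aeval_algHom_apply` needs the `ℤ`-linear quotient map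
  rw [show Ideal.Quotient.mkₐ (WittVector 2 k) J PowerSeries.X =
    Ideal.Quotient.mkₐ ℤ J PowerSeries.X from rfl, aeval_algHom_apply,
    Ideal.Quotient.mkₐ_eq_mk, Ideal.Quotient.eq_zero_iff_mem, mPoly, map_mul, map_sub, map_pow,
    aeval_X, aeval_C, map_ofNat]
  exact Ideal.mem_span_pair.mpr ⟨PowerSeries.X + 2, 0, by rw [pPowerSeries]; ring⟩

end RdIdeal

/-- Let `k` be an algebraically closed field of characteristic `2`, `W = W(k)`.
For `d ≥ 3` and `D` the dihedral group of order `2^d`, the `W`-algebra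
`W[[t]]/(p_d(t)(t − 2), 2·p_d(t))` is isomorphic to a subquotient algebra of the group
algebra `WD`: there is a `W`-algebra `B` admitting an injective `W`-algebra homomorphism
into `WD` (i.e. `B` is a `W`-subalgebra `S` of `WD`) and a surjective `W`-algebra
homomorphism onto `W[[t]]/(p_d(t)(t − 2), 2·p_d(t))` (whose kernel is an ideal `J` of `S`,
realizing the latter ring as `S/J`). -/
theorem Rd_is_subquotient_of_dihedral_group_algebra
    {k : Type u} [Field k] [IsAlgClosed k] [CharP k 2] (d : ℕ) (hd : 3 ≤ d) :
    ∃ (B : Type u) (_ : Ring B) (_ : Algebra (WittVector 2 k) B)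
      (ι : B →ₐ[WittVector 2 k]
        MonoidAlgebra (WittVector 2 k) (DihedralGroup (2 ^ (d - 1))))
      (π : B →ₐ[WittVector 2 k]
        (PowerSeries (WittVector 2 k) ⧸
          Ideal.span {pPowerSeries k d * (PowerSeries.X - 2), 2 * pPowerSeries k d})),
      Function.Injective ι ∧ Function.Surjective π := by
  obtain ⟨j, rfl⟩ : ∃ j, d = j + 2 := ⟨d - 2, by omega⟩
  -- `((2 : ℕ) : W)` rather than `2`: the form in which `W` is known to be `2`-adically complete
  have hdist : ((X * pPoly (j + 2)).map (algebraMap ℤ (WittVector 2 k))).IsDistinguishedAt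
      (Ideal.span {((2 : ℕ) : WittVector 2 k)}) := by
    simpa [Ideal.map_span] using (isDistinguishedAt_X.mul
      (pPoly_isDistinguishedAt_and_natDegree j).1).map (algebraMap ℤ (WittVector 2 k))
  refine exists_subquotient_of_ker_le ((MonoidAlgebra.mapDomainAlgHom _ _ (rotationHom _)).comp
    (aeval (rotationSum _ (2 ^ (j + 1))))) _
    (hdist.surjective_aeval_mk_X (aeval_X_mul_pPoly_mem_span k _)) fun g hg ↦ ?_
  have h2 : (2 : WittVector 2 k) ≠ 0 := by exact_mod_cast WittVector.p_nonzero 2 k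
  obtain ⟨h, rfl⟩ := mPoly_map_dvd_of_aeval_rotationSum_eq_zero h2 j
    (MonoidAlgebra.mapDomain_injective (rotationHom_injective _) (by simpa using hg))
  rw [RingHom.mem_ker, map_mul, aeval_map_algebraMap, aeval_mk_X_mPoly_eq_zero, zero_mul]
end

section
/- Let ℓ ≥ 3 be an integer and let ζ be a primitive 2^ℓ-th root of unity in a fixed algebraic closure of F (so that ζ² is a primitive 2^{ℓ−1}-th root of unity). Then the minimal polynomial of ζ + ζ^{−1} over F equals g(t)² − 2, where g(t) is the minimal polynomial of ζ² + ζ^{−2} over F. Moreover, if ζ₄ is a primitive 4th root of unity in the algebraic closure of F, then the minimal polynomial of ζ₄ + ζ₄^{−1} over F is t. -/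
open Polynomial

noncomputable def iterSqSubTwo : ℕ → ℤ[X]
  | 0 => X
  | n + 1 => iterSqSubTwo n ^ 2 - 2

namespace iterSqSubTwo

theorem natDegree_eq (n : ℕ) : (iterSqSubTwo n).natDegree = 2 ^ n := by
  induction n with
  | zero => simp [iterSqSubTwo]
  | succ n ih =>
    rw [iterSqSubTwo, ← C_ofNat, natDegree_sub_C, natDegree_pow, ih, pow_succ, mul_comm]

theorem monic (n : ℕ) : (iterSqSubTwo n).Monic := by
  induction n with
  | zero => exact monic_X
  | succ n ih =>
    have hdeg : 0 < (iterSqSubTwo n ^ 2).natDegree := by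
      rw [natDegree_pow, natDegree_eq]; positivity
    refine (ih.pow 2).sub_of_left ?_
    calc degree (2 : ℤ[X]) ≤ 0 := by rw [← C_ofNat]; exact degree_C_le
      _ < degree (iterSqSubTwo n ^ 2) := natDegree_pos_iff_degree_pos.mp hdeg

theorem map_zmod_two (n : ℕ) : (iterSqSubTwo n).map (Int.castRingHom (ZMod 2)) = X ^ 2 ^ n := by
  induction n with
  | zero => simp [iterSqSubTwo]
  | succ n ih =>
    have h2 : (2 : (ZMod 2)[X]) = 0 := by rw [← C_ofNat, show (2 : ZMod 2) = 0 from rfl, C_0]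
    rw [iterSqSubTwo, Polynomial.map_sub, Polynomial.map_pow, ih, Polynomial.map_ofNat, h2,
      sub_zero, ← pow_mul, pow_succ]

theorem two_dvd_coeff (n : ℕ) {i : ℕ} (hi : i < 2 ^ n) : (2 : ℤ) ∣ (iterSqSubTwo n).coeff i := by
  have hcoeff := congr_arg (coeff · i) (map_zmod_two n)
  simp only [coeff_map, coeff_X_pow, if_neg hi.ne, eq_intCast] at hcoeff
  exact (ZMod.intCast_zmod_eq_zero_iff_dvd _ 2).mp hcoeff

theorem coeff_zero_succ (n : ℕ) :
    (iterSqSubTwo (n + 1)).coeff 0 = -2 ∨ (iterSqSubTwo (n + 1)).coeff 0 = 2 := by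
  simp only [coeff_zero_eq_eval_zero]
  induction n with
  | zero => left; simp [iterSqSubTwo]
  | succ n ih =>
    right
    rw [iterSqSubTwo, eval_sub, eval_pow, eval_ofNat]
    rcases ih with h | h <;> rw [h] <;> norm_num

theorem isEisensteinAt_map {R : Type*} [CommRing R] [IsDomain R] (h2 : Prime (2 : R)) (n : ℕ) :
    ((iterSqSubTwo (n + 1)).map (algebraMap ℤ R)).IsEisensteinAt (Ideal.span {2}) := by
  have hmonic := (monic (n + 1)).map (algebraMap ℤ R)
  refine hmonic.isEisensteinAt_of_mem_of_notMem ?_ (fun {i} hi => ?_) ?_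
  · rw [Ne, Ideal.span_singleton_eq_top]
    exact h2.not_isUnit
  · rw [(monic _).natDegree_map, natDegree_eq] at hi
    obtain ⟨c, hc⟩ := two_dvd_coeff (n + 1) hi
    rw [coeff_map, hc, map_mul, map_ofNat]
    exact Ideal.mul_mem_right _ _ (Ideal.subset_span rfl)
  · rw [Ideal.span_singleton_pow, Ideal.mem_span_singleton, coeff_map]
    intro h4
    have h : (2 : R) * 2 ∣ 2 * 1 := by
      rcases coeff_zero_succ n with hc | hc <;> rw [hc] at h4 <;> simpa [sq] using h4
    exact h2.not_isUnit (isUnit_of_dvd_one ((mul_dvd_mul_iff_left h2.ne_zero).mp h))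

theorem irreducible_map {R K : Type*} [CommRing R] [IsDomain R] [IsIntegrallyClosed R] [Field K]
    [Algebra R K] [IsFractionRing R K] (h2 : Prime (2 : R)) (n : ℕ) :
    Irreducible ((iterSqSubTwo n).map (algebraMap ℤ K)) := by
  cases n with
  | zero => simpa [iterSqSubTwo] using irreducible_X
  | succ n =>
    have hR : Irreducible ((iterSqSubTwo (n + 1)).map (algebraMap ℤ R)) :=
      (isEisensteinAt_map h2 n).irreducible ((Ideal.span_singleton_prime h2.ne_zero).mpr h2)
        ((monic _).map _).isPrimitive (by rw [(monic _).natDegree_map, natDegree_eq]; positivity)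
    rw [((monic _).map _).irreducible_iff_irreducible_map_fraction_map (K := K), map_map,
      Subsingleton.elim ((algebraMap R K).comp (algebraMap ℤ R)) (algebraMap ℤ K)] at hR
    exact hR

theorem aeval_add_inv {L : Type*} [Field L] {x : L} (hx : x ≠ 0) (n : ℕ) :
    aeval (x + x⁻¹) (iterSqSubTwo n) = x ^ 2 ^ n + (x ^ 2 ^ n)⁻¹ := by
  induction n with
  | zero => simp [iterSqSubTwo]
  | succ n ih =>
    have hxn : x ^ 2 ^ n ≠ 0 := pow_ne_zero _ hx
    rw [iterSqSubTwo, map_sub, map_pow, ih, map_ofNat, pow_succ 2 n, pow_mul]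
    field_simp
    ring

end iterSqSubTwo

theorem IsPrimitiveRoot.add_inv_eq_zero_of_four {L : Type*} [Field L] {ω : L}
    (h : IsPrimitiveRoot ω 4) : ω + ω⁻¹ = 0 := by
  have hsq : ω ^ 2 = -1 := (h.pow (by norm_num) (by norm_num)).eq_neg_one_of_two_right
  have hω : ω ≠ 0 := h.ne_zero (by norm_num)
  field_simp
  linear_combination hsq

theorem minpoly_add_inv_eq_map_iterSqSubTwo {R K L : Type*} [CommRing R] [IsDomain R]
    [IsIntegrallyClosed R] [Field K] [Algebra R K] [IsFractionRing R K] [Field L] [Algebra K L]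
    (h2 : Prime (2 : R)) (n : ℕ) {ζ : L} (hζ : IsPrimitiveRoot ζ (2 ^ (n + 2))) :
    minpoly K (ζ + ζ⁻¹) = (iterSqSubTwo n).map (algebraMap ℤ K) := by
  have hroot : aeval (ζ + ζ⁻¹) ((iterSqSubTwo n).map (algebraMap ℤ K)) = 0 := by
    rw [aeval_map_algebraMap, iterSqSubTwo.aeval_add_inv (hζ.ne_zero (by positivity))]
    exact (hζ.pow (by positivity) (by ring)).add_inv_eq_zero_of_four
  exact (minpoly.eq_of_irreducible_of_monic (iterSqSubTwo.irreducible_map (R := R) h2 n) hroot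
    ((iterSqSubTwo.monic n).map _)).symm

/-- Let `k` be an algebraically closed field of characteristic `2`, `W = W(k)`,
and `F` the fraction field of `W`. For `ℓ ≥ 3` and a primitive `2^ℓ`-th root of unity `ζ` in an
algebraic closure of `F`, the minimal polynomial of `ζ + ζ⁻¹` over `F` equals `g(t)² − 2` where
`g` is the minimal polynomial of `ζ² + ζ⁻²` over `F`; and for a primitive `4`-th root of unity
`ζ₄`, the minimal polynomial of `ζ₄ + ζ₄⁻¹` over `F` is `t`. -/
theorem minpoly_two_pow_root_of_unity
    {k : Type*} [Field k] [IsAlgClosed k] [CharP k 2] :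
    (∀ (ℓ : ℕ), 3 ≤ ℓ →
      ∀ ζ : AlgebraicClosure (FractionRing (WittVector 2 k)),
        IsPrimitiveRoot ζ (2 ^ ℓ) →
          minpoly (FractionRing (WittVector 2 k)) (ζ + ζ⁻¹) =
            (minpoly (FractionRing (WittVector 2 k)) (ζ ^ 2 + (ζ ^ 2)⁻¹)) ^ 2 - 2) ∧
    (∀ ζ₄ : AlgebraicClosure (FractionRing (WittVector 2 k)),
      IsPrimitiveRoot ζ₄ 4 →
        minpoly (FractionRing (WittVector 2 k)) (ζ₄ + ζ₄⁻¹) = Polynomial.X) := by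
  refine ⟨fun ℓ hℓ ζ hζ => ?_, fun ζ₄ hζ₄ => by rw [hζ₄.add_inv_eq_zero_of_four, minpoly.zero]⟩
  have h2 : Prime (2 : WittVector 2 k) := by exact_mod_cast (WittVector.irreducible (p := 2) (k := k)).prime
  obtain ⟨n, rfl⟩ : ∃ n, ℓ = n + 3 := ⟨ℓ - 3, by omega⟩
  have hζ2 : IsPrimitiveRoot (ζ ^ 2) (2 ^ (n + 2)) := hζ.pow (by positivity) (by ring)
  rw [minpoly_add_inv_eq_map_iterSqSubTwo h2 (n + 1) hζ,
    minpoly_add_inv_eq_map_iterSqSubTwo h2 n hζ2, iterSqSubTwo, Polynomial.map_sub,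
    Polynomial.map_pow, Polynomial.map_ofNat]
end

section
/- In the group algebra WZ, the evaluation of p_d at σ + σ^{−1} equals σ·T(σ²); that is, p_d(σ + σ^{−1}) = σ + σ³ + σ⁵ + ⋯ + σ^{2^{d−1}−1}. -/
/-- The cyclic group `Z = ⟨σ⟩` of order `2^(d-1)`, written multiplicatively. -/
abbrev cyclicZ (d : ℕ) := Multiplicative (ZMod (2 ^ (d - 1)))

/-- The generator `σ` of `Z`, viewed in the group algebra `WZ`. -/
noncomputable def sigma (k : Type*) [CommRing k] (d : ℕ) :
    MonoidAlgebra (WittVector 2 k) (cyclicZ d) :=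
  MonoidAlgebra.of (WittVector 2 k) (cyclicZ d)
    (Multiplicative.ofAdd (1 : ZMod (2 ^ (d - 1))))

/-- The inverse `σ⁻¹` of the generator, viewed in the group algebra `WZ`. -/
noncomputable def sigmaInv (k : Type*) [CommRing k] (d : ℕ) :
    MonoidAlgebra (WittVector 2 k) (cyclicZ d) :=
  MonoidAlgebra.of (WittVector 2 k) (cyclicZ d)
    (Multiplicative.ofAdd (-1 : ZMod (2 ^ (d - 1))))

/-- `T(σ²) = 1 + σ² + σ⁴ + ⋯ + σ^(2^(d-1) - 2) ∈ WZ`. -/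
noncomputable def Tsigma (k : Type*) [CommRing k] (d : ℕ) :
    MonoidAlgebra (WittVector 2 k) (cyclicZ d) :=
  ∑ i ∈ Finset.range (2 ^ (d - 2)), sigma k d ^ (2 * i)

section Helpers

variable (k : Type*) [CommRing k] (d : ℕ)

/-- `σ^n` as a function of an integer exponent. -/
noncomputable def Fel (n : ℤ) : MonoidAlgebra (WittVector 2 k) (cyclicZ d) :=
  MonoidAlgebra.of (WittVector 2 k) (cyclicZ d)
    (Multiplicative.ofAdd ((n : ZMod (2 ^ (d - 1)))))

lemma Fel_congr {a b : ℤ} (h : (a : ZMod (2 ^ (d - 1))) = (b : ZMod (2 ^ (d - 1)))) :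
    Fel k d a = Fel k d b := by unfold Fel; rw [h]

lemma Fel_add (a b : ℤ) : Fel k d (a + b) = Fel k d a * Fel k d b := by
  unfold Fel
  rw [← map_mul, ← ofAdd_add, Int.cast_add]

lemma Fel_zero : Fel k d 0 = 1 := by
  unfold Fel
  simp only [Int.cast_zero, ofAdd_zero, map_one]

lemma sigma_eq : sigma k d = Fel k d 1 := by
  unfold sigma Fel; norm_num

lemma sigmaInv_eq : sigmaInv k d = Fel k d (-1) := by
  unfold sigmaInv Fel; push_cast; rfl

lemma Fel_pow (a : ℤ) (m : ℕ) : Fel k d a ^ m = Fel k d (a * m) := by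
  induction m with
  | zero => simp [Fel_zero]
  | succ n ih =>
      rw [pow_succ, ih, ← Fel_add]
      congr 1
      push_cast
      ring

lemma sigma_pow (m : ℕ) : sigma k d ^ m = Fel k d m := by
  rw [sigma_eq, Fel_pow, one_mul]

lemma aeval_qPoly (j : ℕ) :
    Polynomial.aeval (Fel k d 1 + Fel k d (-1)) (qPoly (j + 2))
      = Fel k d (2 ^ j) + Fel k d (-(2 ^ j)) := by
  induction j with
  | zero => simp [qPoly]
  | succ n ih =>
      rw [show qPoly (n + 1 + 2) = qPoly (n + 2) ^ 2 - 2 from rfl]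
      have h1 : Fel k d (2 ^ n) * Fel k d (2 ^ n) = Fel k d (2 ^ (n + 1)) := by
        rw [← Fel_add]; congr 1; ring
      have h2 : Fel k d (-(2 ^ n)) * Fel k d (-(2 ^ n)) = Fel k d (-(2 ^ (n + 1))) := by
        rw [← Fel_add]; congr 1; ring
      have h3 : Fel k d (2 ^ n) * Fel k d (-(2 ^ n)) = 1 := by
        rw [← Fel_add, add_neg_cancel, Fel_zero]
      have hexp : (Fel k d (2 ^ n) + Fel k d (-(2 ^ n))) ^ 2
          = Fel k d (2 ^ n) * Fel k d (2 ^ n) + Fel k d (-(2 ^ n)) * Fel k d (-(2 ^ n))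
            + 2 * (Fel k d (2 ^ n) * Fel k d (-(2 ^ n))) := by ring
      rw [map_sub, map_pow, ih, hexp, h1, h2, h3, map_ofNat]
      ring

lemma prod_lemma (m : ℕ) :
    ∏ j ∈ Finset.range m, (Fel k d (2 ^ j) + Fel k d (-(2 ^ j)))
      = ∑ i ∈ Finset.range (2 ^ m), Fel k d (2 * i + 1 - 2 ^ m) := by
  induction m with
  | zero => simp [Fel_zero]
  | succ n ih =>
      rw [Finset.prod_range_succ, ih, Finset.sum_mul]
      have hsplit : (2 : ℕ) ^ (n + 1) = 2 ^ n + 2 ^ n := by ring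
      rw [hsplit, Finset.sum_range_add]
      have e1 : ∀ i ∈ Finset.range (2 ^ n),
          Fel k d (2 * i + 1 - 2 ^ n) * (Fel k d (2 ^ n) + Fel k d (-(2 ^ n)))
            = Fel k d (2 * (2 ^ n + i : ℕ) + 1 - (2 ^ n + 2 ^ n : ℕ))
              + Fel k d (2 * i + 1 - (2 ^ n + 2 ^ n : ℕ)) := by
        intro i _
        rw [mul_add, ← Fel_add, ← Fel_add]
        congr 1
        · congr 1; push_cast; ring
        · congr 1; push_cast; ring
      rw [Finset.sum_congr rfl e1, Finset.sum_add_distrib, add_comm]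
      have hcast : ((2 ^ n + 2 ^ n : ℕ) : ℤ) = 2 ^ (n + 1) := by push_cast; ring
      rw [hcast]

lemma F2_mul_S (hd : 2 ≤ d) :
    Fel k d 2 * ∑ i ∈ Finset.range (2 ^ (d - 2)), Fel k d (2 * i + 1)
      = ∑ i ∈ Finset.range (2 ^ (d - 2)), Fel k d (2 * i + 1) := by
  set g : ℕ → MonoidAlgebra (WittVector 2 k) (cyclicZ d) := fun j => Fel k d (2 * j + 1) with hg
  have hstep : ∀ i : ℕ, Fel k d 2 * g i = g (i + 1) := by
    intro i
    rw [hg, ← Fel_add]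
    congr 1
    push_cast
    ring
  have h2M : ((2 * 2 ^ (d - 2) : ℕ) : ZMod (2 ^ (d - 1))) = 0 := by
    have hpow : (2 : ℕ) * 2 ^ (d - 2) = 2 ^ (d - 1) := by
      have h : d - 1 = (d - 2) + 1 := by omega
      rw [h, pow_succ]; ring
    rw [hpow]; exact ZMod.natCast_self _
  have hgM : g (2 ^ (d - 2)) = g 0 := by
    apply Fel_congr
    push_cast at h2M ⊢
    linear_combination h2M
  rw [Finset.mul_sum]
  have h1 : ∑ i ∈ Finset.range (2 ^ (d - 2)), Fel k d 2 * g i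
      = ∑ i ∈ Finset.range (2 ^ (d - 2)), g (i + 1) :=
    Finset.sum_congr rfl fun i _ => hstep i
  rw [h1]
  have h2 := Finset.sum_range_succ g (2 ^ (d - 2))
  have h3 := Finset.sum_range_succ' g (2 ^ (d - 2))
  rw [h2, hgM] at h3
  exact (add_right_cancel h3).symm

lemma F2c_mul_S (hd : 2 ≤ d) (c : ℕ) :
    Fel k d (2 * c) * ∑ i ∈ Finset.range (2 ^ (d - 2)), Fel k d (2 * i + 1)
      = ∑ i ∈ Finset.range (2 ^ (d - 2)), Fel k d (2 * i + 1) := by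
  induction c with
  | zero => simp [Fel_zero]
  | succ n ih =>
      have hsp : Fel k d (2 * ((n : ℕ) + 1 : ℕ)) = Fel k d (2 * n) * Fel k d 2 := by
        rw [← Fel_add]; congr 1
      rw [hsp, mul_assoc, F2_mul_S k d hd]
      exact ih

end Helpers

/-- In the group algebra `WZ` (for `k` algebraically closed of characteristic
`2`, `W = W(k)`, `Z` cyclic of order `2^(d-1)` with `d ≥ 3`), the evaluation of `p_d` at
`σ + σ⁻¹` equals `σ·T(σ²) = σ + σ³ + ⋯ + σ^(2^(d-1) − 1)`. -/
theorem pPoly_eval_sigma_add_sigmaInv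
    {k : Type*} [Field k] [IsAlgClosed k] [CharP k 2] (d : ℕ) (hd : 3 ≤ d) :
    Polynomial.aeval (sigma k d + sigmaInv k d) (pPoly d) = sigma k d * Tsigma k d := by
  have hx : sigma k d + sigmaInv k d = Fel k d 1 + Fel k d (-1) := by
    rw [sigma_eq, sigmaInv_eq]
  rw [hx]
  unfold pPoly
  rw [map_prod]
  have hIcc : Finset.Icc 2 (d - 1) = Finset.Ico 2 d := by
    rw [← Finset.Ico_add_one_right_eq_Icc]
    congr 1
    omega
  rw [hIcc, Finset.prod_Ico_eq_prod_range]
  have hq : ∀ j ∈ Finset.range (d - 2),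
      Polynomial.aeval (Fel k d 1 + Fel k d (-1)) (qPoly (2 + j))
        = Fel k d (2 ^ j) + Fel k d (-(2 ^ j)) := by
    intro j _
    rw [Nat.add_comm]
    exact aeval_qPoly k d j
  rw [Finset.prod_congr rfl hq, prod_lemma]
  -- RHS: σ · T(σ²) = ∑ Fel (2 i + 1)
  have hT : sigma k d * Tsigma k d
      = ∑ i ∈ Finset.range (2 ^ (d - 2)), Fel k d (2 * i + 1) := by
    unfold Tsigma
    rw [Finset.mul_sum]
    refine Finset.sum_congr rfl fun i _ => ?_
    rw [sigma_pow k d (2 * i), sigma_eq k d, ← Fel_add]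
    congr 1
    push_cast
    ring
  rw [hT]
  -- LHS: ∑ Fel (2 i + 1 - 2^(d-2)) = Fel (-(2^(d-2))) * S
  have hL : ∑ i ∈ Finset.range (2 ^ (d - 2)), Fel k d (2 * i + 1 - 2 ^ (d - 2))
      = Fel k d (-(2 ^ (d - 2))) * ∑ i ∈ Finset.range (2 ^ (d - 2)), Fel k d (2 * i + 1) := by
    rw [Finset.mul_sum]
    refine Finset.sum_congr rfl fun i _ => ?_
    rw [← Fel_add]
    congr 1
    ring
  rw [hL]
  -- Fel (-(2^(d-2))) = Fel (2 · 2^(d-3)) since 2·2^(d-2) = 2^(d-1) ≡ 0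
  have hneg : Fel k d (-(2 ^ (d - 2)))
      = Fel k d (2 * ((2 ^ (d - 3) : ℕ) : ℤ)) := by
    apply Fel_congr
    have h2M : ((2 * 2 ^ (d - 2) : ℕ) : ZMod (2 ^ (d - 1))) = 0 := by
      have hpow : (2 : ℕ) * 2 ^ (d - 2) = 2 ^ (d - 1) := by
        have h : d - 1 = (d - 2) + 1 := by omega
        rw [h, pow_succ]; ring
      rw [hpow]; exact ZMod.natCast_self _
    have hp : (2 : ZMod (2 ^ (d - 1))) * 2 ^ (d - 3) = 2 ^ (d - 2) := by
      have h : d - 2 = (d - 3) + 1 := by omega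
      rw [h, pow_succ]; ring
    push_cast at h2M ⊢
    linear_combination -h2M - hp
  rw [hneg]
  exact F2c_mul_S k d (by omega) (2 ^ (d - 3))
end

section
/- The quotient S' := (WZ)^τ/(T(σ²), σT(σ²)) of the fixed subalgebra (WZ)^τ by the ideal generated by T(σ²) and σ·T(σ²) is a free W-module of rank 2^{d−2} − 1, and S' is generated as a W-algebra by the residue class of σ + σ^{−1}. -/
set_option synthInstance.maxHeartbeats 1000000
set_option maxHeartbeats 1000000

/-- The `W`-algebra automorphism `τ` of `WZ` induced by `σ ↦ σ⁻¹`. -/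
noncomputable def tauAut (k : Type*) [CommRing k] (d : ℕ) :
    MonoidAlgebra (WittVector 2 k) (cyclicZ d) ≃ₐ[WittVector 2 k]
      MonoidAlgebra (WittVector 2 k) (cyclicZ d) :=
  MonoidAlgebra.domCongr (WittVector 2 k) (WittVector 2 k) (MulEquiv.inv (cyclicZ d))

/-- The fixed subalgebra `(WZ)^τ`. -/
noncomputable def fixedSubalgebra (k : Type*) [CommRing k] (d : ℕ) :
    Subalgebra (WittVector 2 k) (MonoidAlgebra (WittVector 2 k) (cyclicZ d)) :=
  AlgHom.equalizer (tauAut k d).toAlgHom (AlgHom.id _ _)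

/-- The ideal `(T(σ²), σ·T(σ²))` of `(WZ)^τ`. -/
noncomputable def idealTT (k : Type*) [CommRing k] (d : ℕ) : Ideal (fixedSubalgebra k d) :=
  Ideal.span {x : fixedSubalgebra k d |
    (x : MonoidAlgebra (WittVector 2 k) (cyclicZ d)) = Tsigma k d ∨
    (x : MonoidAlgebra (WittVector 2 k) (cyclicZ d)) = sigma k d * Tsigma k d}

/-!
Write `m = 2^(d-2)`, so that `Z` has order `2m`. An element of `(WZ)^τ` is determined by its
coefficients at `1, σ, …, σ^m`, and it lies in the ideal `(T(σ²), σT(σ²))` exactly when these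
depend only on the parity of the exponent: every element `x` of the ideal satisfies `σ²x = x`, and
conversely such an element is `a T(σ²) + b σT(σ²)`. Comparing the coefficient of each `σ^j`,
`j ≤ m - 2`, with that of whichever of `σ^m`, `σ^(m-1)` has the parity of `j` therefore identifies
`S'` with `W^(m-1)`. The standard basis vectors are the images of `1` and of
`σ^j + σ^(-j) = D_j(σ + σ⁻¹)`, where `D_j` are the Dickson polynomials, so they lie in the
subalgebra generated by `σ + σ⁻¹`.
-/

open MonoidAlgebra Polynomial Finset Multiplicative

theorem Polynomial.dickson_one_one_aeval_add_inv {R A : Type*} [CommRing R] [CommRing A]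
    [Algebra R A] {x y : A} (h : x * y = 1) (c : ℕ) :
    aeval (x + y) (dickson 1 (1 : R) c) = x ^ c + y ^ c := by
  rw [aeval_def, eval₂_eq_eval_map, map_dickson, map_one, dickson_one_one_eval_add_inv x y h]

theorem Ideal.Quotient.adjoin_mk_image_eq_top {R A : Type*} [CommRing R] [CommRing A]
    [Algebra R A] {I : Ideal A} {s : Set A} (h : ∀ a, ∃ b ∈ Algebra.adjoin R s, a - b ∈ I) :
    Algebra.adjoin R (Ideal.Quotient.mk I '' s) = ⊤ := by
  rw [eq_top_iff]
  rintro _ -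
  obtain ⟨a, rfl⟩ := Ideal.Quotient.mk_surjective ‹A ⧸ I›
  obtain ⟨b, hb, hab⟩ := h a
  rw [Ideal.Quotient.eq.2 hab, ← Ideal.Quotient.mkₐ_eq_mk R, Algebra.adjoin_image]
  exact Subalgebra.mem_map.2 ⟨b, hb, rfl⟩

theorem ZMod.neg_natCast_eq_natCast_sub {a n : ℕ} (h : a ≤ n) :
    -(a : ZMod n) = ((n - a : ℕ) : ZMod n) := by
  rw [Nat.cast_sub h, ZMod.natCast_self, zero_sub]

namespace MonoidAlgebra

variable {R G : Type*} [CommRing R] [CommGroup G]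

theorem domCongr_inv_eq_self_iff {x : MonoidAlgebra R G} :
    domCongr R R (MulEquiv.inv G) x = x ↔ ∀ g, x.coeff g⁻¹ = x.coeff g := by
  simp [MonoidAlgebra.ext_iff, Finsupp.ext_iff]

variable {n : ℕ}

theorem of_ofAdd_pow (i : ZMod n) (c : ℕ) :
    of R (Multiplicative (ZMod n)) (ofAdd i) ^ c = of R _ (ofAdd (c * i)) := by
  rw [← map_pow, ← ofAdd_nsmul, nsmul_eq_mul]

theorem coeff_of_ofAdd_natCast {a b : ℕ} (ha : a < n) (hb : b < n) :
    (of R (Multiplicative (ZMod n)) (ofAdd (a : ZMod n))).coeff (ofAdd (b : ZMod n)) =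
      if a = b then 1 else 0 := by
  simp [Finsupp.single_apply, ZMod.natCast_eq_natCast_iff', Nat.mod_eq_of_lt ha,
    Nat.mod_eq_of_lt hb]

theorem coeff_of_ofAdd_mul_ofAdd_add (i j : ZMod n)
    (x : MonoidAlgebra R (Multiplicative (ZMod n))) :
    (of R _ (ofAdd i) * x).coeff (ofAdd (i + j)) = x.coeff (ofAdd j) := by
  rw [of_apply, ofAdd_add, coeff_single_mul_mul, one_mul]

theorem eq_of_coeff_natCast_eq [NeZero n] {m : ℕ} (hn : n = 2 * m)
    {x y : MonoidAlgebra R (Multiplicative (ZMod n))}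
    (hx : domCongr R R (MulEquiv.inv _) x = x) (hy : domCongr R R (MulEquiv.inv _) y = y)
    (h : ∀ j ≤ m, x.coeff (ofAdd (j : ZMod n)) = y.coeff (ofAdd (j : ZMod n))) : x = y := by
  rw [domCongr_inv_eq_self_iff] at hx hy
  ext g
  obtain ⟨i, rfl⟩ := ofAdd.surjective g
  have hi := ZMod.val_lt i
  by_cases him : i.val ≤ m
  · simpa only [ZMod.natCast_zmod_val] using h i.val him
  · have hneg : ((n - i.val : ℕ) : ZMod n) = -i := by
      rw [← ZMod.neg_natCast_eq_natCast_sub hi.le, ZMod.natCast_zmod_val]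
    have := h (n - i.val) (by omega)
    rwa [hneg, ofAdd_neg, hx, hy] at this

end MonoidAlgebra

theorem two_pow_pred_eq_two_mul {d : ℕ} (hd : 2 ≤ d) : 2 ^ (d - 1) = 2 * 2 ^ (d - 2) := by
  rw [← pow_succ']; congr 1; omega

section GroupAlgebra

variable {k : Type*} [CommRing k] {d : ℕ}

theorem mem_fixedSubalgebra_iff {x : MonoidAlgebra (WittVector 2 k) (cyclicZ d)} :
    x ∈ fixedSubalgebra k d ↔ ∀ g, x.coeff g⁻¹ = x.coeff g :=
  domCongr_inv_eq_self_iff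

theorem sigma_pow_s16 (c : ℕ) :
    sigma k d ^ c = of _ (cyclicZ d) (ofAdd (c : ZMod (2 ^ (d - 1)))) := by
  rw [sigma, of_ofAdd_pow, mul_one]

theorem sigmaInv_pow {c : ℕ} (hc : c ≤ 2 ^ (d - 1)) :
    sigmaInv k d ^ c = sigma k d ^ (2 ^ (d - 1) - c) := by
  rw [sigmaInv, of_ofAdd_pow, sigma_pow_s16, mul_neg_one, ZMod.neg_natCast_eq_natCast_sub hc]

theorem sigma_mul_sigmaInv : sigma k d * sigmaInv k d = 1 := by
  rw [sigma, sigmaInv, ← map_mul, ← ofAdd_add, add_neg_cancel, ofAdd_zero, map_one]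

theorem sigma_add_sigmaInv_mem : sigma k d + sigmaInv k d ∈ fixedSubalgebra k d := by
  show domCongr _ _ (MulEquiv.inv _) _ = _
  simp [sigma, sigmaInv, add_comm]

theorem sigma_pow_two_pow : sigma k d ^ 2 ^ (d - 1) = 1 := by
  rw [sigma_pow_s16, ZMod.natCast_self, ofAdd_zero, map_one]

theorem sigma_sq_mul_Tsigma (hd : 2 ≤ d) : sigma k d ^ 2 * Tsigma k d = Tsigma k d := by
  have h := geom_sum_mul (sigma k d ^ 2) (2 ^ (d - 2))
  rw [← pow_mul, ← two_pow_pred_eq_two_mul hd, sigma_pow_two_pow, sub_self] at h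
  simp_rw [← pow_mul] at h
  rw [Tsigma]
  linear_combination h

theorem coeff_sigma_pow_mul_Tsigma (hd : 2 ≤ d) {r a : ℕ} (hr : r < 2) (ha : a < 2 ^ (d - 1)) :
    (sigma k d ^ r * Tsigma k d).coeff (ofAdd (a : ZMod (2 ^ (d - 1)))) =
      if a % 2 = r then 1 else 0 := by
  have hn := two_pow_pred_eq_two_mul hd
  rw [Tsigma, mul_sum, MonoidAlgebra.coeff_sum, Finsupp.finsetSum_apply,
    Finset.sum_congr rfl fun j hj => by
      rw [← pow_add, sigma_pow_s16, coeff_of_ofAdd_natCast (by have := mem_range.1 hj; omega) ha]]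
  split_ifs with h
  · rw [Finset.sum_eq_single (a / 2) (fun j _ hj => if_neg (by omega))
      (fun hj => absurd (mem_range.2 (by omega)) hj), if_pos (by omega)]
  · exact Finset.sum_eq_zero fun j _ => if_neg (by omega)

theorem sigma_pow_mul_Tsigma_mem (hd : 2 ≤ d) {r : ℕ} (hr : r < 2) :
    sigma k d ^ r * Tsigma k d ∈ fixedSubalgebra k d := by
  have hn := two_pow_pred_eq_two_mul hd
  rw [mem_fixedSubalgebra_iff]
  intro g
  obtain ⟨a, ha, rfl⟩ : ∃ a : ℕ, a < 2 ^ (d - 1) ∧ ofAdd (a : ZMod (2 ^ (d - 1))) = g :=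
    ⟨g.toAdd.val, ZMod.val_lt _, by rw [ZMod.natCast_zmod_val, ofAdd_toAdd]⟩
  rcases a.eq_zero_or_pos with rfl | ha0
  · rw [Nat.cast_zero, ofAdd_zero, inv_one]
  rw [← ofAdd_neg, ZMod.neg_natCast_eq_natCast_sub ha.le, coeff_sigma_pow_mul_Tsigma hd hr ha,
    coeff_sigma_pow_mul_Tsigma hd hr (by omega)]
  exact if_congr (by omega) rfl rfl

end GroupAlgebra

/-- Entry `j` is `x_j - x_(2^(d-2) - j % 2)`: since `2^(d-2)` is even for `d ≥ 3`, the second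
index is whichever of `2^(d-2)`, `2^(d-2) - 1` has the parity of `j`. -/
noncomputable def parityDefect (k : Type*) [CommRing k] (d : ℕ) :
    MonoidAlgebra (WittVector 2 k) (cyclicZ d) →ₗ[WittVector 2 k]
      (Fin (2 ^ (d - 2) - 1) → WittVector 2 k) where
  toFun x j := x.coeff (ofAdd ((j : ℕ) : ZMod (2 ^ (d - 1)))) -
    x.coeff (ofAdd ((2 ^ (d - 2) - j % 2 : ℕ) : ZMod (2 ^ (d - 1))))
  map_add' x y := by
    funext j
    simp only [MonoidAlgebra.coeff_add, Finsupp.add_apply, Pi.add_apply]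
    ring
  map_smul' a x := by funext j; simp [mul_sub]

section Quotient

variable {k : Type*} [CommRing k] {d : ℕ}

theorem sigma_sq_mul_of_mem_idealTT (hd : 2 ≤ d) {x : fixedSubalgebra k d}
    (hx : x ∈ idealTT k d) : sigma k d ^ 2 * x = x := by
  induction hx using Submodule.span_induction with
  | mem y hy =>
    rcases hy with hy | hy <;> rw [hy]
    · exact sigma_sq_mul_Tsigma hd
    · rw [mul_left_comm, sigma_sq_mul_Tsigma hd]
  | zero => simp
  | add y z _ _ hy hz => simp only [Subalgebra.coe_add, mul_add, hy, hz]
  | smul a y _ hy => rw [smul_eq_mul, Subalgebra.coe_mul, mul_left_comm, hy]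

theorem parityDefect_eq_zero_of_sigma_sq_mul (hd : 3 ≤ d)
    {x : MonoidAlgebra (WittVector 2 k) (cyclicZ d)} (hx : sigma k d ^ 2 * x = x) :
    parityDefect k d x = 0 := by
  have hperiodic : ∀ a c : ℕ, x.coeff (ofAdd ((a + 2 * c : ℕ) : ZMod (2 ^ (d - 1)))) =
      x.coeff (ofAdd (a : ZMod (2 ^ (d - 1)))) := by
    intro a c
    induction c with
    | zero => rfl
    | succ c ih =>
      have h := coeff_of_ofAdd_mul_ofAdd_add ((2 : ℕ) : ZMod (2 ^ (d - 1))) (a + 2 * c : ℕ) x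
      rw [← sigma_pow_s16, hx, ← Nat.cast_add] at h
      rw [← ih, ← h, show 2 + (a + 2 * c) = a + 2 * (c + 1) by ring]
  have hm : Even (2 ^ (d - 2)) := (Nat.even_pow' (by omega)).2 even_two
  funext j
  have hj := j.isLt
  obtain ⟨c, hc⟩ : ∃ c, 2 ^ (d - 2) - (j : ℕ) % 2 = j + 2 * c :=
    ⟨(2 ^ (d - 2) - j % 2 - j) / 2, by rcases hm with ⟨t, ht⟩; omega⟩
  simp only [parityDefect, LinearMap.coe_mk, AddHom.coe_mk, Pi.zero_apply, hc, hperiodic, sub_self]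

theorem mem_idealTT_of_parityDefect_eq_zero (hd : 3 ≤ d) {x : fixedSubalgebra k d}
    (hx : parityDefect k d x = 0) : x ∈ idealTT k d := by
  have hn := two_pow_pred_eq_two_mul (by omega : 2 ≤ d)
  obtain ⟨t, ht⟩ : Even (2 ^ (d - 2)) := (Nat.even_pow' (by omega)).2 even_two
  have hm0 : 0 < 2 ^ (d - 2) := Nat.two_pow_pos _
  set m := 2 ^ (d - 2)
  set coeffAt := fun j : ℕ => (x : MonoidAlgebra (WittVector 2 k) (cyclicZ d)).coeff
    (ofAdd (j : ZMod (2 ^ (d - 1))))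
  have htop : ∀ j ≤ m, coeffAt j = coeffAt (m - j % 2) := by
    intro j hj
    by_cases hjm : j + 2 ≤ m
    · exact sub_eq_zero.1 (congrFun hx ⟨j, by omega⟩)
    · rw [show m - j % 2 = j by omega]
  let T (r : ℕ) (hr : r < 2) : fixedSubalgebra k d :=
    ⟨sigma k d ^ r * Tsigma k d, sigma_pow_mul_Tsigma_mem (by omega) hr⟩
  have hT : ∀ r (hr : r < 2), T r hr ∈ idealTT k d := fun r hr =>
    Ideal.subset_span (by interval_cases r <;> simp [T])
  have hxT : x = coeffAt m • T 0 (by omega) + coeffAt (m - 1) • T 1 (by omega) := by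
    refine Subtype.ext (eq_of_coeff_natCast_eq hn x.2 (_ : fixedSubalgebra k d).2 fun j hj => ?_)
    simp only [T, Subalgebra.coe_add, Subalgebra.coe_smul, MonoidAlgebra.coeff_add,
      Finsupp.add_apply, coeff_smul_apply, smul_eq_mul,
      coeff_sigma_pow_mul_Tsigma (by omega : 2 ≤ d) two_pos (by omega : j < _),
      coeff_sigma_pow_mul_Tsigma (by omega : 2 ≤ d) one_lt_two (by omega : j < _)]
    change coeffAt j = _
    rw [htop j hj]
    rcases Nat.mod_two_eq_zero_or_one j with h | h <;> simp [h]
  rw [hxT]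
  exact add_mem (Submodule.smul_of_tower_mem _ _ (hT 0 two_pos))
    (Submodule.smul_of_tower_mem _ _ (hT 1 one_lt_two))

theorem parityDefect_eq_single {x : MonoidAlgebra (WittVector 2 k) (cyclicZ d)}
    (j : Fin (2 ^ (d - 2) - 1))
    (hx : ∀ c : ℕ, c ≤ 2 ^ (d - 2) →
      x.coeff (ofAdd (c : ZMod (2 ^ (d - 1)))) = if c = j then 1 else 0) :
    parityDefect k d x = Pi.single j 1 := by
  funext i
  have := i.isLt
  have := j.isLt
  simp only [parityDefect, LinearMap.coe_mk, AddHom.coe_mk, Pi.single_apply, ← Fin.val_inj]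
  rw [hx i (by omega), hx _ (by omega), if_neg (show 2 ^ (d - 2) - (i : ℕ) % 2 ≠ j by omega),
    sub_zero]

theorem exists_mem_adjoin_parityDefect_eq (hd : 2 ≤ d) {x : fixedSubalgebra k d}
    (hx : (x : MonoidAlgebra (WittVector 2 k) (cyclicZ d)) = sigma k d + sigmaInv k d)
    (v : Fin (2 ^ (d - 2) - 1) → WittVector 2 k) :
    ∃ y ∈ Algebra.adjoin (WittVector 2 k) {x}, parityDefect k d y = v := by
  have hn := two_pow_pred_eq_two_mul hd
  have hsingle (j : Fin (2 ^ (d - 2) - 1)) :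
      ∃ y ∈ Algebra.adjoin (WittVector 2 k) {x}, parityDefect k d y = Pi.single j 1 := by
    have hj := j.isLt
    by_cases hj0 : (j : ℕ) = 0
    · refine ⟨1, one_mem _, parityDefect_eq_single j fun c hc => ?_⟩
      rw [Subalgebra.coe_one, ← pow_zero (sigma k d), sigma_pow_s16, hj0,
        coeff_of_ofAdd_natCast (by omega) (by omega)]
      exact if_congr eq_comm rfl rfl
    · refine ⟨aeval x (dickson 1 (1 : WittVector 2 k) j), aeval_mem_adjoin_singleton _ _,
        parityDefect_eq_single j fun c hc => ?_⟩
      rw [aeval_subalgebra_coe, hx, dickson_one_one_aeval_add_inv sigma_mul_sigmaInv,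
        sigmaInv_pow (by omega), sigma_pow_s16, sigma_pow_s16, MonoidAlgebra.coeff_add, Finsupp.add_apply,
        coeff_of_ofAdd_natCast (by omega) (by omega), coeff_of_ofAdd_natCast (by omega) (by omega),
        if_neg (show 2 ^ (d - 1) - (j : ℕ) ≠ c by omega), add_zero]
      exact if_congr eq_comm rfl rfl
  have hv : v ∈ (Algebra.adjoin (WittVector 2 k) {x}).toSubmodule.map
      (parityDefect k d ∘ₗ (fixedSubalgebra k d).val.toLinearMap) := by
    refine Submodule.span_le.2 ?_ ((Pi.basisFun _ _).mem_span v)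
    rintro _ ⟨j, rfl⟩
    obtain ⟨y, hy, hyj⟩ := hsingle j
    exact ⟨y, hy, by simpa using hyj⟩
  obtain ⟨y, hy, hyv⟩ := hv
  exact ⟨y, hy, hyv⟩

end Quotient

theorem quotient_fixedSubalgebra_TT_general
    {k : Type*} [Field k] (d : ℕ) (hd : 3 ≤ d) :
    Nonempty (Module.Basis (Fin (2 ^ (d - 2) - 1)) (WittVector 2 k)
        (fixedSubalgebra k d ⧸ idealTT k d)) ∧
    ∀ x : fixedSubalgebra k d,
      (x : MonoidAlgebra (WittVector 2 k) (cyclicZ d)) = sigma k d + sigmaInv k d →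
        Algebra.adjoin (WittVector 2 k) {Ideal.Quotient.mk (idealTT k d) x} = ⊤ := by
  set L := parityDefect k d ∘ₗ (fixedSubalgebra k d).val.toLinearMap
  have hker : LinearMap.ker L = (idealTT k d).restrictScalars (WittVector 2 k) := by
    ext x
    exact ⟨mem_idealTT_of_parityDefect_eq_zero hd, fun hx =>
      parityDefect_eq_zero_of_sigma_sq_mul hd (sigma_sq_mul_of_mem_idealTT (by omega) hx)⟩
  refine ⟨?_, fun x hx => ?_⟩
  · have hL : Function.Surjective L := fun v => by
      obtain ⟨y, -, hy⟩ := exists_mem_adjoin_parityDefect_eq (by omega)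
        (x := ⟨_, sigma_add_sigmaInv_mem⟩) rfl v
      exact ⟨y, hy⟩
    exact ⟨.ofEquivFun ((Submodule.Quotient.restrictScalarsEquiv _ _).symm ≪≫ₗ
      Submodule.quotEquivOfEq _ _ hker.symm ≪≫ₗ L.quotKerEquivOfSurjective hL)⟩
  · rw [← Set.image_singleton]
    refine Ideal.Quotient.adjoin_mk_image_eq_top fun a => ?_
    obtain ⟨b, hb, hLb⟩ := exists_mem_adjoin_parityDefect_eq (by omega) hx (L a)
    refine ⟨b, hb, ?_⟩
    rw [← Submodule.restrictScalars_mem (WittVector 2 k), ← hker, LinearMap.sub_mem_ker_iff]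
    exact hLb.symm

/-- For `k` algebraically closed of characteristic `2`, `W = W(k)`, `d ≥ 3`,
and `Z` cyclic of order `2^(d-1)`, the quotient `S' = (WZ)^τ/(T(σ²), σT(σ²))` is a free
`W`-module of rank `2^(d-2) − 1`, and `S'` is generated as a `W`-algebra by the residue class
of `σ + σ⁻¹`. -/
theorem quotient_fixedSubalgebra_TT
    {k : Type*} [Field k] [IsAlgClosed k] [CharP k 2] (d : ℕ) (hd : 3 ≤ d) :
    Nonempty (Module.Basis (Fin (2 ^ (d - 2) - 1)) (WittVector 2 k)
        (fixedSubalgebra k d ⧸ idealTT k d)) ∧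
    ∀ x : fixedSubalgebra k d,
      (x : MonoidAlgebra (WittVector 2 k) (cyclicZ d)) = sigma k d + sigmaInv k d →
        Algebra.adjoin (WittVector 2 k) {Ideal.Quotient.mk (idealTT k d) x} = ⊤ :=
  quotient_fixedSubalgebra_TT_general d hd
end

section
/- The quotient Θ := (WZ)^τ/(T(σ²) − σT(σ²)) of the fixed subalgebra (WZ)^τ by the ideal generated by T(σ²) − σ·T(σ²) is a free W-module of rank 2^{d−2}, and Θ is generated as a W-algebra by the residue class of σ + σ^{−1}. -/
/-!
Write `n = 2m` for the order of `Z`, and `t = T(σ²) - σ T(σ²)`. Since `T(σ²)` is the geometric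
sum of `σ²` and `σ^n = 1`, we get `σ² T(σ²) = T(σ²)`, hence `σ t = -t`. So `t = Σ (-1)^a σ^a`
is `τ`-fixed, and every multiple of `t` is a scalar multiple of `t`: the ideal `(t)` of `(WZ)^τ`
is just `W t`. A `τ`-fixed element `f` is determined by its coefficients `f_0, …, f_m`, and `t`
has the unit coefficient `(-1)^m` at `σ^m`, so `f ↦ (f_i - (-1)^(i+m) f_m)_{i<m}` identifies
`(WZ)^τ / (t)` with `W^m`. The standard basis vectors are the classes of `1` and of
`σ^j + σ^(-j) = D_j(σ + σ⁻¹)` for `0 < j < m`, with `D_j` the Dickson polynomials; hence the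
class of `σ + σ⁻¹` generates.
-/

set_option synthInstance.maxHeartbeats 1000000
set_option maxHeartbeats 1000000

/-- The ideal `(T(σ²) − σ·T(σ²))` of `(WZ)^τ`. -/
noncomputable def idealTmT (k : Type*) [CommRing k] (d : ℕ) : Ideal (fixedSubalgebra k d) :=
  Ideal.span {x : fixedSubalgebra k d |
    (x : MonoidAlgebra (WittVector 2 k) (cyclicZ d)) =
      Tsigma k d - sigma k d * Tsigma k d}

lemma ZMod.natCast_eq_natCast_iff_of_lt {n a b : ℕ} (ha : a < n) (hb : b < n) :
    (a : ZMod n) = b ↔ a = b := by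
  rw [ZMod.natCast_eq_natCast_iff', Nat.mod_eq_of_lt ha, Nat.mod_eq_of_lt hb]

lemma ZMod.neg_natCast_ne_natCast {n a b : ℕ} (h₀ : 0 < a + b) (h : a + b < n) :
    -(a : ZMod n) ≠ b := by
  rw [Ne, neg_eq_iff_add_eq_zero, ← Nat.cast_add, ZMod.natCast_eq_zero_iff]
  exact fun hdvd => (Nat.le_of_dvd h₀ hdvd).not_gt h

namespace ZModGroupAlgebra

open MonoidAlgebra Multiplicative

section Defs

variable (R : Type*) [CommRing R] (n : ℕ)

noncomputable def gen : R[Multiplicative (ZMod n)] := of R _ (ofAdd 1)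

noncomputable def genInv : R[Multiplicative (ZMod n)] := of R _ (ofAdd (-1))

noncomputable def inversion : R[Multiplicative (ZMod n)] ≃ₐ[R] R[Multiplicative (ZMod n)] :=
  domCongr R R (MulEquiv.inv _)

noncomputable def invariants : Subalgebra R R[Multiplicative (ZMod n)] :=
  AlgHom.equalizer (inversion R n).toAlgHom (AlgHom.id R _)

noncomputable def evenSum (m : ℕ) : R[Multiplicative (ZMod n)] :=
  ∑ i ∈ Finset.range m, gen R n ^ (2 * i)

noncomputable def signedSum (m : ℕ) : R[Multiplicative (ZMod n)] :=
  evenSum R n m - gen R n * evenSum R n m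

noncomputable def signedSumIdeal (m : ℕ) : Ideal (invariants R n) :=
  Ideal.span {x | (x : R[Multiplicative (ZMod n)]) = signedSum R n m}

noncomputable def orbitSumPoly (j : ℕ) : Polynomial R :=
  if j = 0 then 1 else Polynomial.dickson 1 1 j

end Defs

variable {R : Type*} [CommRing R] {n : ℕ}

lemma coeff_of_ofAdd (a b : ZMod n) :
    (of R _ (ofAdd a)).coeff (ofAdd b) = if a = b then 1 else 0 := by
  simp [of_apply, Finsupp.single_apply]

lemma coeff_of_ofAdd_mul (a b : ZMod n) (f : R[Multiplicative (ZMod n)]) :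
    (of R _ (ofAdd a) * f).coeff (ofAdd b) = f.coeff (ofAdd (b - a)) := by
  simp [of_apply, inv_mul_eq_div, ← ofAdd_sub]

lemma gen_pow (j : ℕ) : gen R n ^ j = of R _ (ofAdd (j : ZMod n)) := by
  rw [gen, ← map_pow, ← ofAdd_nsmul, nsmul_one]

lemma gen_pow_self : gen R n ^ n = 1 := by
  rw [gen_pow, ZMod.natCast_self, ofAdd_zero, map_one]

lemma inversion_of (a : ZMod n) : inversion R n (of R _ (ofAdd a)) = of R _ (ofAdd (-a)) := by
  simp [inversion, of_apply, domCongr_single]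

lemma coeff_inversion (f : R[Multiplicative (ZMod n)]) (a : ZMod n) :
    (inversion R n f).coeff (ofAdd a) = f.coeff (ofAdd (-a)) := by
  simp [inversion, coeff_domCongr]

lemma genInv_pow (j : ℕ) : genInv R n ^ j = of R _ (ofAdd (-(j : ZMod n))) := by
  rw [genInv, ← map_pow, ← ofAdd_nsmul, nsmul_eq_mul, mul_neg_one]

lemma gen_mul_genInv : gen R n * genInv R n = 1 := by
  rw [gen, genInv, ← map_mul, ← ofAdd_add, add_neg_cancel, ofAdd_zero, map_one]

lemma mem_invariants_iff {f : R[Multiplicative (ZMod n)]} :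
    f ∈ invariants R n ↔ ∀ a : ZMod n, f.coeff (ofAdd (-a)) = f.coeff (ofAdd a) := by
  refine ⟨fun h a => ?_, fun h => ?_⟩
  · rw [← coeff_inversion, show inversion R n f = f from h]
  · show inversion R n f = f
    ext g
    exact (coeff_inversion f g.toAdd).trans (h g.toAdd)

lemma gen_add_genInv_mem_invariants : gen R n + genInv R n ∈ invariants R n := by
  change inversion R n (gen R n + genInv R n) = gen R n + genInv R n
  rw [map_add, gen, genInv, inversion_of, inversion_of, neg_neg, add_comm]

lemma aeval_orbitSumPoly (j : ℕ) :
    Polynomial.aeval (gen R n + genInv R n) (orbitSumPoly R j) =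
      if j = 0 then 1 else of R _ (ofAdd (j : ZMod n)) + of R _ (ofAdd (-(j : ZMod n))) := by
  rw [orbitSumPoly]
  split_ifs
  · exact map_one _
  · rw [Polynomial.aeval_def, ← Polynomial.eval_map, Polynomial.map_dickson, map_one,
      Polynomial.dickson_one_one_eval_add_inv _ _ gen_mul_genInv, gen_pow, genInv_pow]

lemma neg_one_pow_val_neg [NeZero n] (hn : Even n) (a : ZMod n) :
    (-1 : R) ^ (-a).val = (-1) ^ a.val := by
  have := a.val_le
  obtain ⟨m, rfl⟩ := hn
  rw [ZMod.neg_val, neg_one_pow_eq_pow_mod_two, neg_one_pow_eq_pow_mod_two (n := a.val)]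
  split_ifs with ha
  · simp [ha]
  · congr 1; omega

section Even

variable {m : ℕ}

lemma gen_sq_mul_evenSum (hn : n = 2 * m) : gen R n ^ 2 * evenSum R n m = evenSum R n m := by
  have h := geom_sum_mul (gen R n ^ 2) m
  rw [← pow_mul, ← hn, gen_pow_self, sub_self] at h
  simp only [evenSum, pow_mul]
  linear_combination h

lemma gen_mul_signedSum (hn : n = 2 * m) : gen R n * signedSum R n m = -signedSum R n m := by
  have h := gen_sq_mul_evenSum (R := R) hn
  simp only [signedSum]
  linear_combination -h

lemma gen_pow_mul_signedSum (hn : n = 2 * m) (j : ℕ) :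
    gen R n ^ j * signedSum R n m = (-1 : R) ^ j • signedSum R n m := by
  induction j with
  | zero => simp
  | succ j ih => rw [pow_succ', mul_assoc, ih, mul_smul_comm, gen_mul_signedSum hn, pow_succ',
      mul_smul, neg_one_smul, smul_neg]

lemma mul_signedSum_mem_span [NeZero n] (hn : n = 2 * m) (f : R[Multiplicative (ZMod n)]) :
    f * signedSum R n m ∈ Submodule.span R {signedSum R n m} := by
  induction f using MonoidAlgebra.induction_on with
  | of g =>
    rw [← ofAdd_toAdd g, ← ZMod.natCast_zmod_val (toAdd g), ← gen_pow,
      gen_pow_mul_signedSum hn]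
    exact Submodule.mem_span_singleton.2 ⟨_, rfl⟩
  | add f g hf hg => rw [add_mul]; exact Submodule.add_mem _ hf hg
  | smul r f hf => rw [smul_mul_assoc]; exact Submodule.smul_mem _ _ hf

lemma coeff_evenSum (b : ZMod n) :
    (evenSum R n m).coeff (ofAdd b) =
      ∑ i ∈ Finset.range m, if ((2 * i : ℕ) : ZMod n) = b then 1 else 0 := by
  simp only [evenSum, gen_pow, coeff_sum, Finsupp.finsetSum_apply, coeff_of_ofAdd]

lemma coeff_signedSum_zero [NeZero n] (hn : n = 2 * m) :
    (signedSum R n m).coeff (ofAdd 0) = 1 := by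
  have hm : 0 < m := by have := NeZero.ne n; omega
  have hT : (evenSum R n m).coeff (ofAdd 0) = 1 := by
    rw [coeff_evenSum, Finset.sum_eq_single 0 (fun i hi hi0 => if_neg fun h => ?_) (by simp [hm])]
    · simp
    · rw [ZMod.natCast_eq_zero_iff] at h
      have := Nat.le_of_dvd (by omega) h
      rw [Finset.mem_range] at hi
      omega
  have hσT : (gen R n * evenSum R n m).coeff (ofAdd 0) = 0 := by
    rw [gen, coeff_of_ofAdd_mul, coeff_evenSum]
    refine Finset.sum_eq_zero fun i _ => if_neg fun h => ?_
    have : ((2 * i + 1 : ℕ) : ZMod n) = 0 := by rw [Nat.cast_succ, h, sub_add_cancel]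
    rw [ZMod.natCast_eq_zero_iff, hn] at this
    have := (dvd_mul_right 2 m).trans this
    omega
  rw [signedSum, coeff_sub, Finsupp.sub_apply, hT, hσT, sub_zero]

lemma coeff_signedSum [NeZero n] (hn : n = 2 * m) (a : ZMod n) :
    (signedSum R n m).coeff (ofAdd a) = (-1) ^ a.val := by
  have step (b : ZMod n) :
      (signedSum R n m).coeff (ofAdd (b + 1)) = -(signedSum R n m).coeff (ofAdd b) := by
    have h := congrArg (fun f => f.coeff (ofAdd (b + 1))) (gen_mul_signedSum (R := R) hn)
    simp only [gen, coeff_of_ofAdd_mul, add_sub_cancel_right, coeff_neg, Finsupp.neg_apply] at h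
    linear_combination h
  have hnat (j : ℕ) : (signedSum R n m).coeff (ofAdd (j : ZMod n)) = (-1) ^ j := by
    induction j with
    | zero => simpa using coeff_signedSum_zero hn
    | succ j ih => rw [Nat.cast_succ, step, ih, pow_succ, mul_neg_one]
  rw [← hnat, ZMod.natCast_zmod_val]

lemma signedSum_mem_invariants [NeZero n] (hn : n = 2 * m) : signedSum R n m ∈ invariants R n :=
  mem_invariants_iff.2 fun a => by
    rw [coeff_signedSum hn, coeff_signedSum hn, neg_one_pow_val_neg (hn ▸ even_two_mul m)]

variable (R m) in
/-- Coefficients `0, …, m - 1` of `f - (-1) ^ m f_m • signedSum`, which has no `σ ^ m` term. -/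
noncomputable def coordsModSignedSum : R[Multiplicative (ZMod n)] →ₗ[R] (Fin m → R) where
  toFun f i :=
    f.coeff (ofAdd ((i : ℕ) : ZMod n)) - (-1) ^ ((i : ℕ) + m) * f.coeff (ofAdd (m : ZMod n))
  map_add' f g := by ext i; simp only [coeff_add, Finsupp.add_apply, Pi.add_apply]; ring
  map_smul' r f := by ext i; simp only [coeff_smul, Finsupp.smul_apply, smul_eq_mul,
    RingHom.id_apply, Pi.smul_apply]; ring

lemma coordsModSignedSum_signedSum [NeZero n] (hn : n = 2 * m) :
    coordsModSignedSum R m (signedSum R n m) = 0 := by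
  ext i
  have hi : (i : ℕ) < n := by omega
  have hm : m < n := by have := NeZero.ne n; omega
  simp only [coordsModSignedSum, LinearMap.coe_mk, AddHom.coe_mk, coeff_signedSum hn,
    ZMod.val_natCast_of_lt hi, ZMod.val_natCast_of_lt hm, Pi.zero_apply]
  rw [pow_add, mul_assoc, ← pow_add, ← two_mul, pow_mul, neg_one_sq, one_pow, mul_one, sub_self]

lemma eq_smul_signedSum_of_coordsModSignedSum_eq_zero [NeZero n] (hn : n = 2 * m)
    {f : R[Multiplicative (ZMod n)]} (hf : f ∈ invariants R n)
    (hψ : coordsModSignedSum R m f = 0) :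
    f = ((-1) ^ m * f.coeff (ofAdd (m : ZMod n))) • signedSum R n m := by
  set c := (-1) ^ m * f.coeff (ofAdd (m : ZMod n))
  have hm : m < n := by have := NeZero.ne n; omega
  have low (a : ZMod n) (ha : a.val ≤ m) : f.coeff (ofAdd a) = c * (-1) ^ a.val := by
    rcases ha.lt_or_eq with ha | ha
    · have h := congr_fun hψ ⟨a.val, ha⟩
      simp only [coordsModSignedSum, LinearMap.coe_mk, AddHom.coe_mk, ZMod.natCast_zmod_val,
        Pi.zero_apply, sub_eq_zero] at h
      rw [h, pow_add]
      ring
    · rw [← ZMod.natCast_zmod_val a, ha, ZMod.val_natCast_of_lt hm, mul_comm, ← mul_assoc,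
        ← pow_add, ← two_mul, pow_mul, neg_one_sq, one_pow, one_mul]
  ext g
  rw [← ofAdd_toAdd g, coeff_smul, Finsupp.smul_apply, coeff_signedSum hn, smul_eq_mul]
  by_cases ha : (toAdd g).val ≤ m
  · exact low _ ha
  · have : NeZero (toAdd g) := ⟨by rintro h; simp [h] at ha⟩
    rw [← mem_invariants_iff.1 hf, low _ (by rw [ZMod.val_neg_of_ne_zero]; omega),
      neg_one_pow_val_neg (hn ▸ even_two_mul m)]

lemma coeff_aeval_orbitSumPoly (hn : n = 2 * m) {i j : ℕ} (hi : i ≤ m) (hj : j < m) :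
    (Polynomial.aeval (gen R n + genInv R n) (orbitSumPoly R j)).coeff (ofAdd (i : ZMod n)) =
      if j = i then 1 else 0 := by
  have hcast := ZMod.natCast_eq_natCast_iff_of_lt (n := n) (a := j) (b := i) (by omega) (by omega)
  rw [aeval_orbitSumPoly]
  by_cases hj0 : j = 0
  · subst hj0
    rw [if_pos rfl, ← map_one (of R _), ← ofAdd_zero, coeff_of_ofAdd]
    exact if_congr (by simpa using hcast) rfl rfl
  · rw [if_neg hj0, coeff_add, Finsupp.add_apply, coeff_of_ofAdd, coeff_of_ofAdd,
      if_neg (ZMod.neg_natCast_ne_natCast (by omega) (by omega)), add_zero]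
    exact if_congr hcast rfl rfl

lemma coordsModSignedSum_aeval_orbitSumPoly (hn : n = 2 * m) (j : Fin m) :
    coordsModSignedSum R m (Polynomial.aeval (gen R n + genInv R n) (orbitSumPoly R j)) =
      Pi.single j 1 := by
  ext i
  simp only [coordsModSignedSum, LinearMap.coe_mk, AddHom.coe_mk,
    coeff_aeval_orbitSumPoly hn i.isLt.le j.isLt, coeff_aeval_orbitSumPoly hn le_rfl j.isLt,
    if_neg j.isLt.ne, mul_zero, sub_zero, Pi.single_apply, Fin.ext_iff]
  exact if_congr eq_comm rfl rfl

variable (R n) in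
noncomputable def genAddInv : invariants R n :=
  ⟨gen R n + genInv R n, gen_add_genInv_mem_invariants⟩

variable (R m) in
noncomputable def coordsPoly (v : Fin m → R) : Polynomial R :=
  ∑ j, v j • orbitSumPoly R j

variable (R n m) in
noncomputable def invariantsCoords : invariants R n →ₗ[R] (Fin m → R) :=
  (coordsModSignedSum R m).comp (invariants R n).val.toLinearMap

lemma invariantsCoords_aeval_coordsPoly (hn : n = 2 * m) (v : Fin m → R) :
    invariantsCoords R n m (Polynomial.aeval (genAddInv R n) (coordsPoly R m v)) = v := by
  simp only [invariantsCoords, LinearMap.comp_apply, AlgHom.toLinearMap_apply,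
    Subalgebra.coe_val, Polynomial.aeval_subalgebra_coe, genAddInv, coordsPoly, map_sum,
    map_smul, coordsModSignedSum_aeval_orbitSumPoly hn]
  ext i
  simp [Finset.sum_apply, Pi.single_apply]

lemma restrictScalars_signedSumIdeal [NeZero n] (hn : n = 2 * m) :
    (signedSumIdeal R n m).restrictScalars R = LinearMap.ker (invariantsCoords R n m) := by
  have hspan : signedSumIdeal R n m = Ideal.span {⟨_, signedSum_mem_invariants hn⟩} := by
    rw [signedSumIdeal]
    congr 1
    ext x
    simp [Subtype.ext_iff]
  ext f
  rw [Submodule.restrictScalars_mem, hspan, Ideal.mem_span_singleton', LinearMap.mem_ker]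
  constructor
  · rintro ⟨a, rfl⟩
    obtain ⟨c, hc⟩ := Submodule.mem_span_singleton.1
      (mul_signedSum_mem_span hn (a : R[Multiplicative (ZMod n)]))
    change coordsModSignedSum R m ((a : R[Multiplicative (ZMod n)]) * signedSum R n m) = 0
    rw [← hc, map_smul, coordsModSignedSum_signedSum hn, smul_zero]
  · intro hf
    have := eq_smul_signedSum_of_coordsModSignedSum_eq_zero hn f.2 hf
    exact ⟨algebraMap R _ _, Subtype.ext (by simpa [Algebra.smul_def] using this.symm)⟩

variable (R n m) in
noncomputable def quotientSignedSumIdealEquiv [NeZero n] (hn : n = 2 * m) :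
    (invariants R n ⧸ signedSumIdeal R n m) ≃ₗ[R] (Fin m → R) :=
  (Submodule.Quotient.restrictScalarsEquiv R _).symm ≪≫ₗ
    Submodule.quotEquivOfEq _ _ (restrictScalars_signedSumIdeal hn) ≪≫ₗ
    (invariantsCoords R n m).quotKerEquivOfSurjective
      fun v => ⟨_, invariantsCoords_aeval_coordsPoly hn v⟩

lemma exists_aeval_mk_genAddInv_eq [NeZero n] (hn : n = 2 * m)
    (θ : invariants R n ⧸ signedSumIdeal R n m) :
    ∃ p : Polynomial R, Polynomial.aeval (Ideal.Quotient.mk _ (genAddInv R n)) p = θ := by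
  obtain ⟨f, rfl⟩ := Ideal.Quotient.mk_surjective θ
  refine ⟨coordsPoly R m (invariantsCoords R n m f), ?_⟩
  rw [← Ideal.Quotient.mkₐ_eq_mk R, Polynomial.aeval_algHom_apply, Ideal.Quotient.mkₐ_eq_mk,
    Ideal.Quotient.eq, ← Submodule.restrictScalars_mem R, restrictScalars_signedSumIdeal hn,
    LinearMap.mem_ker, map_sub, invariantsCoords_aeval_coordsPoly hn, sub_self]

lemma adjoin_mk_genAddInv [NeZero n] (hn : n = 2 * m) :
    Algebra.adjoin R {Ideal.Quotient.mk (signedSumIdeal R n m) (genAddInv R n)} = ⊤ := by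
  rw [Algebra.adjoin_singleton_eq_range_aeval, AlgHom.range_eq_top]
  exact exists_aeval_mk_genAddInv_eq hn

end Even

end ZModGroupAlgebra

theorem quotient_fixedSubalgebra_TmT_general
    {k : Type*} [Field k] (d : ℕ) (hd : 3 ≤ d) :
    Nonempty (Module.Basis (Fin (2 ^ (d - 2))) (WittVector 2 k)
        (fixedSubalgebra k d ⧸ idealTmT k d)) ∧
    ∀ x : fixedSubalgebra k d,
      (x : MonoidAlgebra (WittVector 2 k) (cyclicZ d)) = sigma k d + sigmaInv k d →
        Algebra.adjoin (WittVector 2 k) {Ideal.Quotient.mk (idealTmT k d) x} = ⊤ := by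
  have hn : 2 ^ (d - 1) = 2 * 2 ^ (d - 2) := by rw [← pow_succ']; congr 1; omega
  refine ⟨⟨.ofEquivFun (ZModGroupAlgebra.quotientSignedSumIdealEquiv _ _ _ hn)⟩, fun x hx => ?_⟩
  obtain rfl : x = ZModGroupAlgebra.genAddInv _ _ := Subtype.ext hx
  exact ZModGroupAlgebra.adjoin_mk_genAddInv hn

/-- For `k` algebraically closed of characteristic `2`, `W = W(k)`, `d ≥ 3`,
and `Z` cyclic of order `2^(d-1)`, the quotient `Θ = (WZ)^τ/(T(σ²) − σT(σ²))` is a free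
`W`-module of rank `2^(d-2)`, and `Θ` is generated as a `W`-algebra by the residue class
of `σ + σ⁻¹`. -/
theorem quotient_fixedSubalgebra_TmT
    {k : Type*} [Field k] [IsAlgClosed k] [CharP k 2] (d : ℕ) (hd : 3 ≤ d) :
    Nonempty (Module.Basis (Fin (2 ^ (d - 2))) (WittVector 2 k)
        (fixedSubalgebra k d ⧸ idealTmT k d)) ∧
    ∀ x : fixedSubalgebra k d,
      (x : MonoidAlgebra (WittVector 2 k) (cyclicZ d)) = sigma k d + sigmaInv k d →
        Algebra.adjoin (WittVector 2 k) {Ideal.Quotient.mk (idealTmT k d) x} = ⊤ :=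
  quotient_fixedSubalgebra_TmT_general d hd
end

section
/- Let γ ∈ W and let f be a nonzero element of W[[t]]. Then for every ideal J of W[[t]] satisfying f·(t − 2γ)·W[[t]] ⊆ J and J properly contained in f·W[[t]], there exist α ∈ {0,1} and an integer m ≥ 1 such that J is the ideal generated by f·(t − 2γ) and α·2^m·f. -/
theorem Polynomial.isDistinguishedAt_X_sub_C {A : Type*} [CommRing A] {I : Ideal A} {c : A}
    (hc : c ∈ I) : (X - C c).IsDistinguishedAt I where
  mem {n} hn := by
    obtain rfl : n = 0 := by have := natDegree_X_sub_C_le c; omega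
    simpa using I.neg_mem hc
  monic := monic_X_sub_C c

namespace PowerSeries

variable {A : Type*} [CommRing A] {I : Ideal A} [IsAdicComplete I A] {c : A}

theorem exists_eq_X_sub_C_mul_add_C (hc : c ∈ I) (f : A⟦X⟧) :
    ∃ q a, f = (X - C c) * q + C a := by
  let e := (Polynomial.quotientSpanXSubCAlgEquiv c).symm.trans
    (Polynomial.isDistinguishedAt_X_sub_C hc).algEquivQuotient
  obtain ⟨a, ha⟩ := e.surjective (Ideal.Quotient.mk _ f)
  rw [← Algebra.algebraMap_self_apply a, e.commutes, ← Ideal.Quotient.mk_algebraMap, eq_comm,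
    Ideal.Quotient.mk_eq_mk_iff_sub_mem, Ideal.mem_span_singleton'] at ha
  obtain ⟨q, hq⟩ := ha
  refine ⟨q, a, ?_⟩
  simp only [Polynomial.coe_sub, Polynomial.coe_X, Polynomial.coe_C, algebraMap_apply,
    Algebra.algebraMap_self_apply] at hq
  linear_combination -hq

theorem ideal_eq_span_pair_of_comap_C_eq (hc : c ∈ I) {𝔞 : Ideal A⟦X⟧} (hg : X - C c ∈ 𝔞) {a : A}
    (ha : 𝔞.comap C = Ideal.span {a}) : 𝔞 = Ideal.span {X - C c, C a} := by
  refine le_antisymm (fun f hf ↦ ?_) ?_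
  · obtain ⟨q, b, rfl⟩ := exists_eq_X_sub_C_mul_add_C hc f
    have hb : b ∈ 𝔞.comap C := by
      simpa using 𝔞.sub_mem hf (𝔞.mul_mem_right q hg)
    obtain ⟨t, rfl⟩ := Ideal.mem_span_singleton'.mp (ha ▸ hb)
    exact Ideal.mem_span_pair.mpr ⟨q, C t, by rw [map_mul]; ring⟩
  · have haC : C a ∈ 𝔞 := Ideal.mem_comap.mp (ha ▸ Ideal.mem_span_singleton_self a)
    simpa [Ideal.span_insert, Ideal.span_le, Set.insert_subset_iff] using ⟨hg, haC⟩

end PowerSeries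

theorem IsDiscreteValuationRing.exists_ideal_eq_span_mul_pow {A : Type*} [CommRing A] [IsDomain A]
    [IsDiscreteValuationRing A] {ϖ : A} (hϖ : Irreducible ϖ) {𝔟 : Ideal A} (h𝔟 : 𝔟 ≠ ⊤) :
    ∃ α m : ℕ, (α = 0 ∨ α = 1) ∧ 1 ≤ m ∧ 𝔟 = Ideal.span {(α : A) * ϖ ^ m} := by
  rcases eq_or_ne 𝔟 ⊥ with rfl | hbot
  · exact ⟨0, 1, .inl rfl, le_rfl, by simp⟩
  obtain ⟨m, rfl⟩ := ideal_eq_span_pow_irreducible hbot hϖ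
  refine ⟨1, m, .inr rfl, Nat.one_le_iff_ne_zero.mpr ?_, by simp⟩
  rintro rfl
  simp at h𝔟

theorem Ideal.eq_span_singleton_mul_colon {R : Type*} [CommRing R] {J : Ideal R} {f : R}
    (hJ : J ≤ Ideal.span {f}) : J = Ideal.span {f} * J.colon (Ideal.span {f}) := by
  refine le_antisymm (fun x hx ↦ ?_) (Ideal.mul_le.mpr fun y hy a ha ↦ ?_)
  · obtain ⟨a, rfl⟩ := Ideal.mem_span_singleton'.mp (hJ hx)
    exact mul_comm a f ▸ Ideal.mul_mem_mul (Ideal.mem_span_singleton_self f)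
      (Ideal.mem_colon_span_singleton.mpr hx)
  · obtain ⟨t, rfl⟩ := Ideal.mem_span_singleton'.mp hy
    simpa [mul_comm, mul_left_comm] using J.mul_mem_left t (Ideal.mem_colon_span_singleton.mp ha)

theorem ideal_between_eq_span_general {k : Type*} [Field k] [IsAlgClosed k] [CharP k 2]
    (γ : WittVector 2 k) (f : PowerSeries (WittVector 2 k))
    (J : Ideal (PowerSeries (WittVector 2 k)))
    (hJ₁ : Ideal.span {f * (PowerSeries.X - PowerSeries.C (2 * γ))} ≤ J)
    (hJ₂ : J < Ideal.span {f}) :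
    ∃ (α m : ℕ), (α = 0 ∨ α = 1) ∧ 1 ≤ m ∧
      J = Ideal.span {f * (PowerSeries.X - PowerSeries.C (2 * γ)),
        (α : PowerSeries (WittVector 2 k)) * 2 ^ m * f} := by
  have h2γ : 2 * γ ∈ Ideal.span {((2 : ℕ) : WittVector 2 k)} := by
    simpa using Ideal.mul_mem_right γ _ (Ideal.mem_span_singleton_self _)
  have hg_mem : PowerSeries.X - PowerSeries.C (2 * γ) ∈ J.colon (Ideal.span {f}) :=
    Ideal.mem_colon_span_singleton.mpr (mul_comm f _ ▸ hJ₁ (Ideal.mem_span_singleton_self _))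
  have hcomap_ne_top : (J.colon (Ideal.span {f})).comap PowerSeries.C ≠ ⊤ := by
    intro htop
    have hfJ : PowerSeries.C 1 * f ∈ J :=
      Ideal.mem_colon_span_singleton.mp (Ideal.mem_comap.mp (htop ▸ Submodule.mem_top))
    rw [map_one, one_mul] at hfJ
    exact hJ₂.not_ge (Ideal.span_le.mpr (Set.singleton_subset_iff.mpr hfJ))
  obtain ⟨α, m, hα, hm, hcomap⟩ :=
    IsDiscreteValuationRing.exists_ideal_eq_span_mul_pow (WittVector.irreducible 2) hcomap_ne_top
  refine ⟨α, m, hα, hm, ?_⟩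
  rw [Ideal.eq_span_singleton_mul_colon hJ₂.le,
    PowerSeries.ideal_eq_span_pair_of_comap_C_eq h2γ hg_mem hcomap, Ideal.span_mul_span']
  simp only [Set.singleton_mul, Set.image_insert_eq, Set.image_singleton, map_mul, map_natCast,
    map_pow, Nat.cast_ofNat, map_ofNat]
  rw [mul_comm f ((α : PowerSeries (WittVector 2 k)) * 2 ^ m)]

/-- Let `k` be an algebraically closed field of characteristic `2`,
`W = W(k)` the ring of infinite Witt vectors over `k`. Let `γ ∈ W` and let `f` be a nonzero
element of `W[[t]]`. Then every ideal `J` of `W[[t]]` with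
`f·(t − 2γ)·W[[t]] ⊆ J ⊊ f·W[[t]]` is of the form `(f·(t − 2γ), α·2^m·f)` for some
`α ∈ {0,1}` and some integer `m ≥ 1`. -/
theorem ideal_between_eq_span {k : Type*} [Field k] [IsAlgClosed k] [CharP k 2]
    (γ : WittVector 2 k) (f : PowerSeries (WittVector 2 k)) (hf : f ≠ 0)
    (J : Ideal (PowerSeries (WittVector 2 k)))
    (hJ₁ : Ideal.span {f * (PowerSeries.X - PowerSeries.C (2 * γ))} ≤ J)
    (hJ₂ : J < Ideal.span {f}) :
    ∃ (α m : ℕ), (α = 0 ∨ α = 1) ∧ 1 ≤ m ∧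
      J = Ideal.span {f * (PowerSeries.X - PowerSeries.C (2 * γ)),
        (α : PowerSeries (WittVector 2 k)) * 2 ^ m * f} :=
  ideal_between_eq_span_general γ f J hJ₁ hJ₂
end
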